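/- arXiv:1109.5159 — 2 statements merged into one kernel-verified Lean document; each statement's English description precedes it below -/
import Mathlib

section
/- Fix ε, δ with 0 < ε < δ < 1. For T > 0 and 1 ≤ m ≤ M set z_{m,δ}(T) = ψ_m^{-1}(δ ψ_m(ρ_M(T))), z_{m,ε}(T) = ψ_m^{-1}(ε ψ_m(ρ_M(T))), and β_m(T) = (T − λ_1 z_{m,δ}(T) − μ_1 ψ_1(z_{m,δ}(T))) / (T − λ_1 z_{m,ε}(T) − μ_1 ψ_1(z_{m,ε}(T))). Then for every m with 1 ≤ m ≤ M, β_m(T) → (1−δ)/(1−ε) as T → 0⁺; and as T → ∞, β_1(T) → (1−δ)/(1−ε) while β_m(T) → 1 for every m with 1 < m ≤ M. -/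
open Filter Set Topology

private lemma muldiv_aux {C D y : ℝ} (hy : y ≠ 0) : C * y / D / y = C / D := by
  rcases eq_or_ne D 0 with h|h
  · simp [h]
  · field_simp

private lemma divdiv_aux {a b r : ℝ} (hr : r ≠ 0) : (a / r) / (b / r) = a / b := by
  rcases eq_or_ne b 0 with hb|hb
  · simp [hb]
  · field_simp


open Filter Set Topology

set_option maxHeartbeats 2000000 in
theorem stmt18
    (M : ℕ) (hM : 2 ≤ M)
    (d : ℝ) (hd : 0 < d)
    (u v w : ℕ → ℝ)
    (hu : ∀ m, 1 ≤ m → m ≤ M - 1 → 0 < u m)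
    (hv : ∀ m, 1 ≤ m → m ≤ M - 1 → 0 < v m)
    (hw : ∀ m, 1 ≤ m → m ≤ M - 1 → 0 < w m)
    (S lam mu : ℕ → ℝ)
    (hS : ∀ m, 2 ≤ m → m ≤ M → 0 < S m)
    (hlam : ∀ m, 1 ≤ m → m ≤ M → 0 < lam m)
    (hmu : ∀ m, 1 ≤ m → m ≤ M → 0 < mu m)
    (ψ : ℕ → ℝ → ℝ)
    (hψM : ∀ y, ψ M y = y)
    (hψrec : ∀ m, 2 ≤ m → m ≤ M → ∀ y,
      ψ (m - 1) y = d * (v (m - 1) / w (m - 1) + 1) * y /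
        (u (m - 1) * (S m - lam m * y - mu m * ψ m y)))
    (ξ : ℕ → ℝ)
    (hξpos : ∀ m, 1 ≤ m → m ≤ M - 1 → 0 < ξ m)
    (hξlt : ∀ m, 1 ≤ m → m + 1 ≤ M - 1 → ξ m < ξ (m + 1))
    (hξzero : ∀ m, 1 ≤ m → m ≤ M - 1 →
      S (m + 1) - lam (m + 1) * ξ m - mu (m + 1) * ψ (m + 1) (ξ m) = 0)
    (hξuniq : ∀ m, 1 ≤ m → m ≤ M - 1 → ∀ y, 0 < y → (m + 1 ≤ M - 1 → y < ξ (m + 1)) →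
      S (m + 1) - lam (m + 1) * y - mu (m + 1) * ψ (m + 1) y = 0 → y = ξ m)
    (hψprop : ∀ m, 1 ≤ m → m ≤ M →
      ContinuousOn (ψ m) {y : ℝ | 0 ≤ y ∧ (m ≤ M - 1 → y < ξ m)} ∧
      StrictMonoOn (ψ m) {y : ℝ | 0 ≤ y ∧ (m ≤ M - 1 → y < ξ m)} ∧
      (∀ y, 0 ≤ y → (m ≤ M - 1 → y < ξ m) → 0 ≤ ψ m y) ∧
      ψ m 0 = 0)
    (hψtop : ∀ m, 1 ≤ m → m ≤ M - 1 → Tendsto (ψ m) (𝓝[<] (ξ m)) atTop)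
    (ψinv : ℕ → ℝ → ℝ)
    (hinv : ∀ m, 1 ≤ m → m ≤ M →
      (∀ y, 0 ≤ y → (m ≤ M - 1 → y < ξ m) → ψinv m (ψ m y) = y) ∧
      (∀ x, 0 ≤ x → ψ m (ψinv m x) = x ∧ 0 ≤ ψinv m x ∧ (m ≤ M - 1 → ψinv m x < ξ m)))
    (ρ : ℝ → ℝ)
    (hρ : ∀ T, 0 ≤ T → ρ T ∈ Set.Ico 0 (ξ 1) ∧ lam 1 * ρ T + mu 1 * ψ 1 (ρ T) = T)
    (ε δ : ℝ) (hε : 0 < ε) (hεδ : ε < δ) (hδ : δ < 1) :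
    (∀ m, 1 ≤ m → m ≤ M →
      Tendsto (fun T => (T - lam 1 * ψinv m (δ * ψ m (ρ T)) - mu 1 * ψ 1 (ψinv m (δ * ψ m (ρ T)))) /
        (T - lam 1 * ψinv m (ε * ψ m (ρ T)) - mu 1 * ψ 1 (ψinv m (ε * ψ m (ρ T)))))
        (𝓝[>] 0) (𝓝 ((1 - δ) / (1 - ε)))) ∧
    Tendsto (fun T => (T - lam 1 * ψinv 1 (δ * ψ 1 (ρ T)) - mu 1 * ψ 1 (ψinv 1 (δ * ψ 1 (ρ T)))) /
        (T - lam 1 * ψinv 1 (ε * ψ 1 (ρ T)) - mu 1 * ψ 1 (ψinv 1 (ε * ψ 1 (ρ T)))))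
      atTop (𝓝 ((1 - δ) / (1 - ε))) ∧
    (∀ m, 1 < m → m ≤ M →
      Tendsto (fun T => (T - lam 1 * ψinv m (δ * ψ m (ρ T)) - mu 1 * ψ 1 (ψinv m (δ * ψ m (ρ T)))) /
        (T - lam 1 * ψinv m (ε * ψ m (ρ T)) - mu 1 * ψ 1 (ψinv m (ε * ψ m (ρ T)))))
        atTop (𝓝 1)) := by
  have hM1 : 1 ≤ M := le_trans one_le_two hM
  have hM11 : 1 ≤ M - 1 := by omega
  have hξ1 : 0 < ξ 1 := hξpos 1 le_rfl hM11
  have hδ0 : 0 < δ := lt_trans hε hεδ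
  have hε1 : ε < 1 := lt_trans hεδ hδ
  -- ξ 1 < ξ m for 2 ≤ m ≤ M - 1
  have hξ1lt : ∀ m, 2 ≤ m → m ≤ M - 1 → ξ 1 < ξ m := by
    intro m hm2
    induction m, hm2 using Nat.le_induction with
    | base => intro h; exact hξlt 1 le_rfl h
    | succ n hn ih =>
      intro h
      exact lt_trans (ih (by omega)) (hξlt n (by omega) h)
  -- domain membership of ρ T
  have hρD : ∀ T, 0 ≤ T → ∀ m, 1 ≤ m → m ≤ M →
      0 ≤ ρ T ∧ (m ≤ M - 1 → ρ T < ξ m) := by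
    intro T hT m h1 h2
    obtain ⟨⟨hr0, hr1⟩, _⟩ := hρ T hT
    refine ⟨hr0, fun hm => ?_⟩
    rcases eq_or_lt_of_le h1 with h|h
    · rw [← h]; exact hr1
    · exact lt_trans hr1 (hξ1lt m h hm)
  have hρpos : ∀ T, 0 < T → 0 < ρ T := by
    intro T hT
    obtain ⟨⟨hr0, hr1⟩, heq⟩ := hρ T hT.le
    rcases eq_or_lt_of_le hr0 with h|h
    · exfalso
      have h0 := (hψprop 1 le_rfl hM1).2.2.2
      rw [← h, h0, mul_zero, mul_zero, add_zero] at heq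
      linarith
    · exact h
  -- slope lemma
  have hslope : ∀ m, 1 ≤ m → m ≤ M →
      ∃ a : ℝ, 0 < a ∧ Tendsto (fun y => ψ m y / y) (𝓝[>] (0:ℝ)) (𝓝 a) := by
    have key : ∀ k m, m + k = M → 1 ≤ m →
        ∃ a : ℝ, 0 < a ∧ Tendsto (fun y => ψ m y / y) (𝓝[>] (0:ℝ)) (𝓝 a) := by
      intro k
      induction k with
      | zero =>
        intro m hm h1
        have hmM : m = M := by omega
        subst hmM
        refine ⟨1, one_pos, ?_⟩
        apply Tendsto.congr' _ (tendsto_const_nhds : Tendsto (fun _ : ℝ => (1:ℝ)) (𝓝[>] (0:ℝ)) (𝓝 1))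
        filter_upwards [self_mem_nhdsWithin] with y (hy : 0 < y)
        rw [hψM y, div_self hy.ne']
      | succ k ih =>
        intro m hm h1
        obtain ⟨a, ha, hta⟩ := ih (m+1) (by omega) (by omega)
        have hm1 : m ≤ M - 1 := by omega
        have hm1M : 2 ≤ m + 1 := by omega
        have hmM : m + 1 ≤ M := by omega
        have hrec := hψrec (m+1) hm1M hmM
        simp only [Nat.add_sub_cancel] at hrec
        have hvm := hv m h1 hm1
        have hwm := hw m h1 hm1
        have hCpos : 0 < d * (v m / w m + 1) := by positivity
        have hupos := hu m h1 hm1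
        have hSpos := hS (m+1) hm1M hmM
        refine ⟨d * (v m / w m + 1) / (u m * S (m+1)), by positivity, ?_⟩
        have hid : Tendsto (fun y : ℝ => y) (𝓝[>] (0:ℝ)) (𝓝 0) :=
          tendsto_id.mono_left nhdsWithin_le_nhds
        have hψ10 : Tendsto (fun y => ψ (m+1) y) (𝓝[>] (0:ℝ)) (𝓝 0) := by
          have h2 := hta.mul hid
          rw [mul_zero] at h2
          apply Tendsto.congr' _ h2
          filter_upwards [self_mem_nhdsWithin] with y (hy : 0 < y)
          exact div_mul_cancel₀ _ hy.ne'
        have hden : Tendsto (fun y => u m * (S (m+1) - lam (m+1) * y - mu (m+1) * ψ (m+1) y))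
            (𝓝[>] (0:ℝ)) (𝓝 (u m * S (m+1))) := by
          have h3 : Tendsto (fun y => S (m+1) - lam (m+1) * y - mu (m+1) * ψ (m+1) y)
              (𝓝[>] (0:ℝ)) (𝓝 (S (m+1) - lam (m+1) * 0 - mu (m+1) * 0)) :=
            (tendsto_const_nhds.sub (tendsto_const_nhds.mul hid)).sub
              (tendsto_const_nhds.mul hψ10)
          simp only [mul_zero, sub_zero] at h3
          exact tendsto_const_nhds.mul h3
        have h4 := (tendsto_const_nhds : Tendsto (fun _ : ℝ => d * (v m / w m + 1)) (𝓝[>] (0:ℝ)) (𝓝 (d * (v m / w m + 1)))).div hden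
          (by positivity)
        apply Tendsto.congr' _ h4
        filter_upwards [self_mem_nhdsWithin] with y (hy : 0 < y)
        show d * (v m / w m + 1) / (u m * (S (m + 1) - lam (m + 1) * y - mu (m + 1) * ψ (m + 1) y)) = ψ m y / y
        rw [hrec y, muldiv_aux hy.ne']
    intro m h1 h2
    exact key (M - m) m (by omega) h1
  -- facts about g_c y = ψinv m (c * ψ m y)
  have hgfact : ∀ m, 1 ≤ m → m ≤ M → ∀ c, 0 < c → c < 1 → ∀ y, 0 < y →
      (m ≤ M - 1 → y < ξ m) →
      0 < ψinv m (c * ψ m y) ∧ ψinv m (c * ψ m y) ≤ y ∧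
      ψ m (ψinv m (c * ψ m y)) = c * ψ m y ∧
      (m ≤ M - 1 → ψinv m (c * ψ m y) < ξ m) ∧ 0 < ψ m y := by
    intro m h1 h2 c hc hc1 y hy hyξ
    obtain ⟨hcont, hmono, hnn, h0⟩ := hψprop m h1 h2
    obtain ⟨hli, hri⟩ := hinv m h1 h2
    have hyD : y ∈ {y : ℝ | 0 ≤ y ∧ (m ≤ M - 1 → y < ξ m)} := ⟨hy.le, hyξ⟩
    have h0D : (0:ℝ) ∈ {y : ℝ | 0 ≤ y ∧ (m ≤ M - 1 → y < ξ m)} :=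
      ⟨le_rfl, fun hm => hξpos m h1 hm⟩
    have hψy : 0 < ψ m y := by
      have := hmono h0D hyD hy
      rwa [h0] at this
    have hx : 0 ≤ c * ψ m y := by positivity
    obtain ⟨hre, hznn, hzlt⟩ := hri _ hx
    have hzD : ψinv m (c * ψ m y) ∈ {y : ℝ | 0 ≤ y ∧ (m ≤ M - 1 → y < ξ m)} := ⟨hznn, hzlt⟩
    have hzpos : 0 < ψinv m (c * ψ m y) := by
      rcases eq_or_lt_of_le hznn with h|h
      · exfalso
        have : ψ m (ψinv m (c * ψ m y)) = 0 := by rw [← h, h0]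
        rw [hre] at this
        nlinarith
      · exact h
    have hzy : ψinv m (c * ψ m y) ≤ y := by
      by_contra hcon
      push_neg at hcon
      have := hmono hyD hzD hcon
      rw [hre] at this
      nlinarith
    exact ⟨hzpos, hzy, hre, hzlt, hψy⟩
  -- PART 1
  have part1 : ∀ m, 1 ≤ m → m ≤ M →
      Tendsto (fun T => (T - lam 1 * ψinv m (δ * ψ m (ρ T)) - mu 1 * ψ 1 (ψinv m (δ * ψ m (ρ T)))) /
        (T - lam 1 * ψinv m (ε * ψ m (ρ T)) - mu 1 * ψ 1 (ψinv m (ε * ψ m (ρ T)))))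
        (𝓝[>] (0:ℝ)) (𝓝 ((1 - δ) / (1 - ε))) := by
    intro m h1 h2
    obtain ⟨a, hapos, hta⟩ := hslope m h1 h2
    obtain ⟨a1, ha1pos, hta1⟩ := hslope 1 le_rfl hM1
    have hid : Tendsto (fun y : ℝ => y) (𝓝[>] (0:ℝ)) (𝓝 0) :=
      tendsto_id.mono_left nhdsWithin_le_nhds
    have hev : ∀ᶠ y in 𝓝[>] (0:ℝ), 0 < y ∧ (m ≤ M - 1 → y < ξ m) := by
      rcases le_or_gt m (M-1) with hm|hm
      · filter_upwards [self_mem_nhdsWithin, hid.eventually_lt_const (hξpos m h1 hm)]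
          with y h1' h2'
        exact ⟨h1', fun _ => h2'⟩
      · filter_upwards [self_mem_nhdsWithin] with y h1'
        exact ⟨h1', fun h => absurd h (by omega)⟩
    have key : ∀ c, 0 < c → c < 1 →
        Tendsto (fun y => (lam 1 * y + mu 1 * ψ 1 y - lam 1 * ψinv m (c * ψ m y) -
          mu 1 * ψ 1 (ψinv m (c * ψ m y))) / y) (𝓝[>] (0:ℝ))
          (𝓝 ((lam 1 + mu 1 * a1) * (1 - c))) := by
      intro c hc hc1
      have hfacts : ∀ y, 0 < y ∧ (m ≤ M - 1 → y < ξ m) →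
          0 < ψinv m (c * ψ m y) ∧ ψinv m (c * ψ m y) ≤ y ∧
          ψ m (ψinv m (c * ψ m y)) = c * ψ m y ∧
          (m ≤ M - 1 → ψinv m (c * ψ m y) < ξ m) ∧ 0 < ψ m y :=
        fun y hy => hgfact m h1 h2 c hc hc1 y hy.1 hy.2
      have hg0 : Tendsto (fun y => ψinv m (c * ψ m y)) (𝓝[>] (0:ℝ)) (𝓝[>] (0:ℝ)) := by
        rw [tendsto_nhdsWithin_iff]
        constructor
        · apply squeeze_zero' (t₀ := 𝓝[>] (0:ℝ)) ?_ ?_ hid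
          · filter_upwards [hev] with y hy; exact (hfacts y hy).1.le
          · filter_upwards [hev] with y hy; exact (hfacts y hy).2.1
        · filter_upwards [hev] with y hy; exact (hfacts y hy).1
      have hgy : Tendsto (fun y => ψ m (ψinv m (c * ψ m y)) / ψinv m (c * ψ m y))
          (𝓝[>] (0:ℝ)) (𝓝 a) := hta.comp hg0
      have hratio : Tendsto (fun y => ψinv m (c * ψ m y) / y) (𝓝[>] (0:ℝ)) (𝓝 c) := by
        have h1' := ((tendsto_const_nhds : Tendsto (fun _ : ℝ => c) (𝓝[>] (0:ℝ)) (𝓝 c)).mul hta).div hgy hapos.ne'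
        have heq : (c * a) / a = c := mul_div_cancel_right₀ c hapos.ne'
        rw [heq] at h1'
        apply Tendsto.congr' _ h1'
        filter_upwards [hev] with y hy
        obtain ⟨hz0, hzy, hze, _, hψy⟩ := hfacts y hy
        simp only [Pi.div_apply]
        rw [hze]
        field_simp [hc.ne', hψy.ne', hz0.ne', hy.1.ne']
      have hpsi1g : Tendsto (fun y => ψ 1 (ψinv m (c * ψ m y)) / y) (𝓝[>] (0:ℝ))
          (𝓝 (a1 * c)) := by
        have h1' := (hta1.comp hg0).mul hratio
        apply Tendsto.congr' _ h1'
        filter_upwards [hev] with y hy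
        obtain ⟨hz0, hzy, hze, _, hψy⟩ := hfacts y hy
        show ψ 1 (ψinv m (c * ψ m y)) / ψinv m (c * ψ m y) * (ψinv m (c * ψ m y) / y) = _
        field_simp
      -- the main limit for H_c
      have hyy : Tendsto (fun y : ℝ => y / y) (𝓝[>] (0:ℝ)) (𝓝 1) := by
        apply Tendsto.congr' _ (tendsto_const_nhds : Tendsto (fun _ : ℝ => (1:ℝ)) (𝓝[>] (0:ℝ)) (𝓝 1))
        filter_upwards [self_mem_nhdsWithin] with y (hy : 0 < y)
        rw [div_self hy.ne']
      have base : Tendsto (fun y => lam 1 * (y / y) + mu 1 * (ψ 1 y / y) -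
          lam 1 * (ψinv m (c * ψ m y) / y) - mu 1 * (ψ 1 (ψinv m (c * ψ m y)) / y))
          (𝓝[>] (0:ℝ))
          (𝓝 (lam 1 * 1 + mu 1 * a1 - lam 1 * c - mu 1 * (a1 * c))) :=
        (((tendsto_const_nhds.mul hyy).add (tendsto_const_nhds.mul hta1)).sub
          (tendsto_const_nhds.mul hratio)).sub (tendsto_const_nhds.mul hpsi1g)
      have hval : lam 1 * 1 + mu 1 * a1 - lam 1 * c - mu 1 * (a1 * c) =
          (lam 1 + mu 1 * a1) * (1 - c) := by ring
      rw [hval] at base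
      apply Tendsto.congr' _ base
      filter_upwards [self_mem_nhdsWithin] with y (hy : 0 < y)
      field_simp
    -- behavior of ρ near 0
    have hnn1 := (hψprop 1 le_rfl hM1).2.2.1
    have hρ0 : Tendsto ρ (𝓝[>] (0:ℝ)) (𝓝[>] (0:ℝ)) := by
      have hevT : ∀ᶠ T in 𝓝[>] (0:ℝ), 0 < ρ T ∧ ρ T ≤ T / lam 1 := by
        filter_upwards [self_mem_nhdsWithin] with T (hT : 0 < T)
        obtain ⟨⟨hr0, hr1⟩, heq⟩ := hρ T hT.le
        have hψr : 0 ≤ ψ 1 (ρ T) := hnn1 _ hr0 (fun _ => hr1)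
        have hl1 := hlam 1 le_rfl hM1
        have hm1' := hmu 1 le_rfl hM1
        refine ⟨hρpos T hT, ?_⟩
        rw [le_div_iff₀ hl1, mul_comm]
        nlinarith
      rw [tendsto_nhdsWithin_iff]
      constructor
      · apply squeeze_zero' (t₀ := 𝓝[>] (0:ℝ)) ?_ ?_
            (by simpa using hid.div_const (lam 1))
        · filter_upwards [hevT] with T hT; exact hT.1.le
        · filter_upwards [hevT] with T hT; exact hT.2
      · filter_upwards [hevT] with T hT; exact hT.1
    have keyδ := (key δ hδ0 hδ).comp hρ0
    have keyε := (key ε hε hε1).comp hρ0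
    have L1pos : 0 < lam 1 + mu 1 * a1 := by
      have := hlam 1 le_rfl hM1
      have := hmu 1 le_rfl hM1
      positivity
    have hfinal := keyδ.div keyε (mul_pos L1pos (by linarith : (0:ℝ) < 1 - ε)).ne'
    have hval2 : (lam 1 + mu 1 * a1) * (1 - δ) / ((lam 1 + mu 1 * a1) * (1 - ε)) =
        (1 - δ) / (1 - ε) := mul_div_mul_left _ _ L1pos.ne'
    rw [hval2] at hfinal
    apply Tendsto.congr' _ hfinal
    filter_upwards [self_mem_nhdsWithin] with T (hT : 0 < T)
    obtain ⟨⟨hr0, hr1⟩, heq⟩ := hρ T hT.le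
    have hrpos : 0 < ρ T := hρpos T hT
    show _ = (T - lam 1 * ψinv m (δ * ψ m (ρ T)) - mu 1 * ψ 1 (ψinv m (δ * ψ m (ρ T)))) /
        (T - lam 1 * ψinv m (ε * ψ m (ρ T)) - mu 1 * ψ 1 (ψinv m (ε * ψ m (ρ T))))
    simp only [Pi.div_apply, Function.comp_apply]
    rw [divdiv_aux hrpos.ne', heq]
  refine ⟨part1, ?_, ?_⟩
  -- PART 2
  · obtain ⟨hcont1, hmono1, hnn1, h01⟩ := hψprop 1 le_rfl hM1
    have hl1 := hlam 1 le_rfl hM1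
    have hmu1 := hmu 1 le_rfl hM1
    have hψρtop : Tendsto (fun T => ψ 1 (ρ T)) atTop atTop := by
      have haff : Tendsto (fun T : ℝ => (T - lam 1 * ξ 1) / mu 1) atTop atTop :=
        ((tendsto_atTop_add_const_right atTop (-(lam 1 * ξ 1)) tendsto_id).congr
          (fun x => (sub_eq_add_neg x _).symm)).atTop_div_const hmu1
      apply tendsto_atTop_mono' atTop ?_ haff
      filter_upwards [eventually_ge_atTop (0:ℝ)] with T hT
      obtain ⟨⟨hr0, hr1⟩, heq⟩ := hρ T hT
      rw [div_le_iff₀ hmu1]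
      nlinarith
    have key2 : ∀ c, 0 < c → c < 1 →
        Tendsto (fun T => (T - lam 1 * ψinv 1 (c * ψ 1 (ρ T)) -
          mu 1 * ψ 1 (ψinv 1 (c * ψ 1 (ρ T)))) / (mu 1 * ψ 1 (ρ T))) atTop (𝓝 (1 - c)) := by
      intro c hc hc1
      have hfacts : ∀ T, 0 < T →
          0 < ψinv 1 (c * ψ 1 (ρ T)) ∧ ψinv 1 (c * ψ 1 (ρ T)) ≤ ρ T ∧
          ψ 1 (ψinv 1 (c * ψ 1 (ρ T))) = c * ψ 1 (ρ T) ∧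
          (1 ≤ M - 1 → ψinv 1 (c * ψ 1 (ρ T)) < ξ 1) ∧ 0 < ψ 1 (ρ T) := by
        intro T hT
        obtain ⟨hr0, hrx⟩ := hρD T hT.le 1 le_rfl hM1
        exact hgfact 1 le_rfl hM1 c hc hc1 (ρ T) (hρpos T hT) hrx
      have hterm : Tendsto (fun T => lam 1 * (ρ T - ψinv 1 (c * ψ 1 (ρ T))) /
          (mu 1 * ψ 1 (ρ T))) atTop (𝓝 0) := by
        apply squeeze_zero' ?_ ?_ (tendsto_const_nhds.div_atTop
          (hψρtop.const_mul_atTop hmu1) :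
          Tendsto (fun T => lam 1 * ξ 1 / (mu 1 * ψ 1 (ρ T))) atTop (𝓝 0))
        · filter_upwards [eventually_gt_atTop (0:ℝ)] with T hT
          obtain ⟨hz0, hzr, hze, _, hψr⟩ := hfacts T hT
          have : 0 ≤ lam 1 * (ρ T - ψinv 1 (c * ψ 1 (ρ T))) := by nlinarith
          positivity
        · filter_upwards [eventually_gt_atTop (0:ℝ)] with T hT
          obtain ⟨hz0, hzr, hze, _, hψr⟩ := hfacts T hT
          obtain ⟨⟨hr0, hr1⟩, heq⟩ := hρ T hT.le
          have hDpos : 0 < mu 1 * ψ 1 (ρ T) := by positivity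
          gcongr
          nlinarith
      have hone := hterm.add (tendsto_const_nhds :
        Tendsto (fun _ : ℝ => 1 - c) atTop (𝓝 (1 - c)))
      rw [zero_add] at hone
      apply Tendsto.congr' _ hone
      filter_upwards [eventually_gt_atTop (0:ℝ)] with T hT
      obtain ⟨hz0, hzr, hze, _, hψr⟩ := hfacts T hT
      obtain ⟨⟨hr0, hr1⟩, heq⟩ := hρ T hT.le
      have hD : mu 1 * ψ 1 (ρ T) ≠ 0 := by positivity
      have hrepr : T - lam 1 * ψinv 1 (c * ψ 1 (ρ T)) - mu 1 * ψ 1 (ψinv 1 (c * ψ 1 (ρ T))) =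
          lam 1 * (ρ T - ψinv 1 (c * ψ 1 (ρ T))) + (1 - c) * (mu 1 * ψ 1 (ρ T)) := by
        rw [hze]
        linear_combination (-1 : ℝ) * heq
      rw [hrepr, add_div, mul_div_cancel_right₀ _ hD]
    have hfinal := (key2 δ hδ0 hδ).div (key2 ε hε hε1)
      (by linarith : (0:ℝ) < 1 - ε).ne'
    apply Tendsto.congr' _ hfinal
    filter_upwards [(hψρtop.const_mul_atTop hmu1).eventually_gt_atTop 0] with T hD
    simp only [Pi.div_apply]
    rw [divdiv_aux hD.ne']
  -- PART 3
  · intro m hm1 hm2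
    have h1m : 1 ≤ m := le_of_lt hm1
    obtain ⟨hcontm, hmonom, hnnm, h0m⟩ := hψprop m h1m hm2
    obtain ⟨hcont1, hmono1, hnn1, h01⟩ := hψprop 1 le_rfl hM1
    have hl1 := hlam 1 le_rfl hM1
    have hmu1 := hmu 1 le_rfl hM1
    have h0Dm : (0:ℝ) ∈ {y : ℝ | 0 ≤ y ∧ (m ≤ M - 1 → y < ξ m)} :=
      ⟨le_rfl, fun hm => hξpos m h1m hm⟩
    have hξ1mem : ξ 1 ∈ {y : ℝ | 0 ≤ y ∧ (m ≤ M - 1 → y < ξ m)} :=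
      ⟨hξ1.le, fun hmm => hξ1lt m hm1 hmm⟩
    have key3 : ∀ c, 0 < c → c < 1 → ∃ B : ℝ, ∀ T, 0 ≤ T →
        0 ≤ lam 1 * ψinv m (c * ψ m (ρ T)) + mu 1 * ψ 1 (ψinv m (c * ψ m (ρ T))) ∧
        lam 1 * ψinv m (c * ψ m (ρ T)) + mu 1 * ψ 1 (ψinv m (c * ψ m (ρ T))) ≤ B := by
      intro c hc hc1
      have hψξnn : 0 ≤ ψ m (ξ 1) := hnnm _ hξ1.le hξ1mem.2
      obtain ⟨hre, hznn, hzlt⟩ := (hinv m h1m hm2).2 (c * ψ m (ξ 1)) (by positivity)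
      have hψξpos : 0 < ψ m (ξ 1) := by
        have h := hmonom h0Dm hξ1mem hξ1
        rwa [h0m] at h
      have hzsξ : ψinv m (c * ψ m (ξ 1)) < ξ 1 := by
        by_contra hcon
        push_neg at hcon
        have h := hmonom.monotoneOn hξ1mem ⟨hznn, hzlt⟩ hcon
        rw [hre] at h
        nlinarith
      refine ⟨lam 1 * ψinv m (c * ψ m (ξ 1)) + mu 1 * ψ 1 (ψinv m (c * ψ m (ξ 1))), ?_⟩
      intro T hT
      obtain ⟨hr0, hrx⟩ := hρD T hT m h1m hm2
      obtain ⟨⟨_, hr1⟩, _⟩ := hρ T hT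
      have hx : 0 ≤ c * ψ m (ρ T) := mul_nonneg hc.le (hnnm _ hr0 hrx)
      obtain ⟨hre2, hznn2, hzlt2⟩ := (hinv m h1m hm2).2 _ hx
      have hψρle : ψ m (ρ T) ≤ ψ m (ξ 1) := hmonom.monotoneOn ⟨hr0, hrx⟩ hξ1mem hr1.le
      have hzzs : ψinv m (c * ψ m (ρ T)) ≤ ψinv m (c * ψ m (ξ 1)) := by
        by_contra hcon
        push_neg at hcon
        have h := hmonom ⟨hznn, hzlt⟩ ⟨hznn2, hzlt2⟩ hcon
        rw [hre, hre2] at h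
        nlinarith
      have hzξ1 : ψinv m (c * ψ m (ρ T)) < ξ 1 := lt_of_le_of_lt hzzs hzsξ
      have hzD1 : 0 ≤ ψ 1 (ψinv m (c * ψ m (ρ T))) := hnn1 _ hznn2 (fun _ => hzξ1)
      have hψ1le : ψ 1 (ψinv m (c * ψ m (ρ T))) ≤ ψ 1 (ψinv m (c * ψ m (ξ 1))) :=
        hmono1.monotoneOn ⟨hznn2, fun _ => hzξ1⟩ ⟨hznn, fun _ => hzsξ⟩ hzzs
      constructor
      · have h1 : 0 ≤ lam 1 * ψinv m (c * ψ m (ρ T)) := mul_nonneg hl1.le hznn2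
        nlinarith
      · nlinarith
    obtain ⟨Bδ, hBδ⟩ := key3 δ hδ0 hδ
    obtain ⟨Bε, hBε⟩ := key3 ε hε hε1
    have hfrac : ∀ (B : ℝ) (b : ℝ → ℝ), (∀ T, 0 ≤ T → 0 ≤ b T ∧ b T ≤ B) →
        Tendsto (fun T => (T - b T) / T) atTop (𝓝 1) := by
      intro B b hb
      have hz : Tendsto (fun T => b T / T) atTop (𝓝 0) := by
        apply squeeze_zero' ?_ ?_ (tendsto_const_nhds.div_atTop tendsto_id :
          Tendsto (fun T : ℝ => B / T) atTop (𝓝 0))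
        · filter_upwards [eventually_gt_atTop (0:ℝ)] with T hT
          exact div_nonneg (hb T hT.le).1 hT.le
        · filter_upwards [eventually_gt_atTop (0:ℝ)] with T hT
          gcongr
          exact (hb T hT.le).2
      have h1' := (tendsto_const_nhds :
        Tendsto (fun _ : ℝ => (1:ℝ)) atTop (𝓝 1)).sub hz
      rw [sub_zero] at h1'
      apply Tendsto.congr' _ h1'
      filter_upwards [eventually_gt_atTop (0:ℝ)] with T hT
      rw [sub_div, div_self hT.ne']
    have hδt := hfrac Bδ _ hBδ
    have hεt := hfrac Bε _ hBε
    have hfinal := hδt.div hεt one_ne_zero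
    rw [(by norm_num : (1:ℝ)/1 = 1)] at hfinal
    apply Tendsto.congr' _ hfinal
    filter_upwards [eventually_gt_atTop (0:ℝ)] with T hT
    simp only [Pi.div_apply]
    rw [divdiv_aux hT.ne']
    congr 1 <;> ring
end

section
/- Fix ε, δ with 0 < ε < δ < 1 and an integer m with 1 ≤ m ≤ M, and for T > 0 let χ_{m,ε,δ}(T) = c_{m,ε}(T)/c_{m,δ}(T) be the response coefficient of layer m when the total amount in the top layer equals T, where c_{m,ε}(T) = ψ_0^{(T)}(ψ_m^{-1}(ε ψ_m(ρ_M(T)))) and ψ_0^{(T)}(y) = d y / (T − λ_1 y − μ_1 ψ_1(y)). Then χ_{m,ε,δ}(T) → ε(1−δ)/(δ(1−ε)) as T → 0⁺; and as T → ∞, χ_{m,ε,δ}(T) → (1−δ)/(1−ε) if m = 1, χ_{m,ε,δ}(T) → ψ_m^{-1}(ε ψ_m(ξ_1))/ψ_m^{-1}(δ ψ_m(ξ_1)) if 1 < m < M, and χ_{M,ε,δ}(T) → ε/δ if m = M. -/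
/-!
Put `y = ρ T`, so that `T = λ₁ y + μ₁ ψ₁ y`, and `p_x y = ψ_m⁻¹ (x ψ_m y)`. The denominator of
`c_{m,x}` becomes `λ₁ (y - p_x y) + μ₁ (ψ₁ y - ψ₁ (p_x y))`, so `χ` is a function of `y` alone, and
`ρ T` tends to `0⁺` as `T → 0⁺` and to `ξ₁⁻` as `T → ∞`.

Near `0` every `ψ_j` is asymptotically linear (by the recursion, downwards from `ψ_M = id`), so
`p_x y ~ x y` and the denominator is `~ (1 - x)(λ₁ + μ₁ ψ₁'(0)) y`. Near `ξ₁` the function `ψ₁`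
blows up and the denominator is `~ μ₁ (ψ₁ y - ψ₁ (p_x y))`: for `m = 1` this is `μ₁ (1 - x) ψ₁ y`
and `p_x y → ξ₁`, while for `m > 1` the level `p_x y` tends to `ψ_m⁻¹ (x ψ_m ξ₁) < ξ₁`, where `ψ₁`
stays bounded.
-/

open Filter Set Topology

theorem StrictMonoOn.tendsto_of_tendsto_comp {α β γ : Type*} [LinearOrder β] [TopologicalSpace β]
    [OrderTopology β] [LinearOrder γ] [TopologicalSpace γ] [OrderTopology γ] {f : β → γ}
    {D : Set β} (hf : StrictMonoOn f D) (hD : D.OrdConnected) {t : β} (ht : t ∈ D)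
    {l : Filter α} {k : α → β} (hkD : ∀ᶠ x in l, k x ∈ D)
    (hfk : Tendsto (fun x => f (k x)) l (𝓝 (f t))) : Tendsto k l (𝓝 t) := by
  rw [tendsto_order]
  refine ⟨fun c hc => ?_, fun c hc => ?_⟩
  · by_cases hcD : c ∈ D
    · filter_upwards [hkD, hfk.eventually (eventually_gt_nhds (hf hcD ht hc))] with x hx hfx
      exact (hf.lt_iff_lt hcD hx).1 hfx
    · filter_upwards [hkD] with x hx
      by_contra! hxc
      exact hcD (hD.out hx ht ⟨hxc, hc.le⟩)
  · by_cases hcD : c ∈ D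
    · filter_upwards [hkD, hfk.eventually (eventually_lt_nhds (hf ht hcD hc))] with x hx hfx
      exact (hf.lt_iff_lt hx hcD).1 hfx
    · filter_upwards [hkD] with x hx
      by_contra! hxc
      exact hcD (hD.out ht hx ⟨hc.le, hxc⟩)

theorem MonotoneOn.tendsto_nhdsLT_of_tendsto_atTop_comp {α β γ : Type*} [LinearOrder β]
    [TopologicalSpace β] [OrderTopology β] [Preorder γ] [NoMaxOrder γ] {f : β → γ} {b a : β}
    (hf : MonotoneOn f (Ico b a)) {l : Filter α} {k : α → β} (hkD : ∀ᶠ x in l, k x ∈ Ico b a)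
    (hfk : Tendsto (fun x => f (k x)) l atTop) : Tendsto k l (𝓝[<] a) := by
  refine tendsto_nhdsWithin_iff.2 ⟨tendsto_order.2 ⟨fun c hc => ?_, fun c hc => ?_⟩,
    hkD.mono fun x hx => hx.2⟩
  · by_cases hbc : b ≤ c
    · filter_upwards [hkD, hfk.eventually_gt_atTop (f c)] with x hx hfx
      by_contra! hxc
      exact (hf hx ⟨hbc, hc⟩ hxc).not_gt hfx
    · filter_upwards [hkD] with x hx
      exact (not_le.1 hbc).trans_le hx.1
  · filter_upwards [hkD] with x hx
    exact hx.2.trans hc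

theorem Filter.Tendsto.div_of_div_div {α G₀ : Type*} [CommGroupWithZero G₀]
    [TopologicalSpace G₀] [ContinuousInv₀ G₀] [ContinuousMul G₀] {l : Filter α}
    {p q r : α → G₀} {P Q : G₀}
    (hp : Tendsto (fun x => p x / r x) l (𝓝 P)) (hq : Tendsto (fun x => q x / r x) l (𝓝 Q))
    (hQ : Q ≠ 0) (hr : ∀ᶠ x in l, r x ≠ 0) : Tendsto (fun x => p x / q x) l (𝓝 (P / Q)) :=
  (hp.div hq hQ).congr' (hr.mono fun _ hx => div_div_div_cancel_right₀ hx _ _)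

theorem tendsto_nhds_zero_of_tendsto_div_self {f : ℝ → ℝ} {c : ℝ}
    (hf : Tendsto (fun y => f y / y) (𝓝[>] 0) (𝓝 c)) : Tendsto f (𝓝[>] 0) (𝓝 0) := by
  have hid : Tendsto (fun y : ℝ => y) (𝓝[>] 0) (𝓝 0) := nhdsWithin_le_nhds
  have h := (hf.mul hid).congr' <|
    eventually_mem_nhdsWithin.mono fun y hy => div_mul_cancel₀ (f y) (ne_of_gt hy)
  rwa [mul_zero] at h

theorem tendsto_nhdsGT_zero_of_tendsto_div_self {f : ℝ → ℝ} {c : ℝ} (hc : 0 < c)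
    (hf : Tendsto (fun y => f y / y) (𝓝[>] 0) (𝓝 c)) : Tendsto f (𝓝[>] 0) (𝓝[>] 0) := by
  refine tendsto_nhdsWithin_iff.2 ⟨tendsto_nhds_zero_of_tendsto_div_self hf, ?_⟩
  filter_upwards [hf.eventually (eventually_gt_nhds hc), eventually_mem_nhdsWithin]
    with y hfy hy
  exact (div_pos_iff_of_pos_right hy).1 hfy

theorem tendsto_div_self_of_recursion {f : ℝ → ℝ} {c : ℝ}
    (hf : Tendsto (fun y => f y / y) (𝓝[>] 0) (𝓝 c)) (K u S a b : ℝ) (huS : u * S ≠ 0) :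
    Tendsto (fun y => K * y / (u * (S - a * y - b * f y)) / y) (𝓝[>] 0)
      (𝓝 (K / (u * S))) := by
  have hid : Tendsto (fun y : ℝ => y) (𝓝[>] 0) (𝓝 0) := nhdsWithin_le_nhds
  have hden : Tendsto (fun y => u * (S - a * y - b * f y)) (𝓝[>] 0) (𝓝 (u * S)) := by
    simpa using ((tendsto_const_nhds.sub (hid.const_mul a)).sub
      ((tendsto_nhds_zero_of_tendsto_div_self hf).const_mul b)).const_mul u
  refine (tendsto_const_nhds.div hden huS).congr' ?_
  filter_upwards [eventually_mem_nhdsWithin] with y hy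
  rw [Pi.div_apply, mul_div_right_comm, mul_div_cancel_right₀ _ (ne_of_gt hy)]

theorem tendsto_comp_const_mul_div_self {f finv : ℝ → ℝ} {c x : ℝ} (hc : 0 < c) (hx : 0 < x)
    (hf : Tendsto (fun y => f y / y) (𝓝[>] 0) (𝓝 c))
    (hfinv : Tendsto finv (𝓝[>] 0) (𝓝[>] 0)) (hright : ∀ z, 0 < z → f (finv z) = z) :
    Tendsto (fun y => finv (x * f y) / y) (𝓝[>] 0) (𝓝 x) := by
  have hxf : Tendsto (fun y => x * f y / y) (𝓝[>] 0) (𝓝 (x * c)) := by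
    simpa only [mul_div_assoc] using hf.const_mul x
  have hz := tendsto_nhdsGT_zero_of_tendsto_div_self (mul_pos hx hc) hxf
  have hinv : Tendsto (fun z => finv z / z) (𝓝[>] 0) (𝓝 c⁻¹) :=
    ((hf.inv₀ hc.ne').comp hfinv).congr' <| eventually_mem_nhdsWithin.mono
      fun z hz => by simp only [Function.comp_apply, inv_div, hright z hz]
  have hlim : c⁻¹ * (x * c) = x := by field_simp
  refine hlim ▸ (hinv.comp hz).mul hxf |>.congr' ?_
  filter_upwards [hz.eventually eventually_mem_nhdsWithin] with y (hy : 0 < x * f y)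
  simp only [Function.comp_apply]
  rw [div_mul_div_cancel₀ hy.ne']

/-- `ψ_m` on its domain `D` (`[0, ξ_m)`, or `[0, ∞)` for `m = M`), with `finv = ψ_m⁻¹`. -/
structure ContinuousIncreasingBij (f finv : ℝ → ℝ) (D : Set ℝ) : Prop where
  ordConnected : D.OrdConnected
  subset_Ici : D ⊆ Ici 0
  zero_mem : (0 : ℝ) ∈ D
  map_zero : f 0 = 0
  continuousOn : ContinuousOn f D
  strictMonoOn : StrictMonoOn f D
  mapsTo_inv : MapsTo finv (Ici 0) D
  rightInvOn : RightInvOn finv f (Ici 0)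

namespace ContinuousIncreasingBij

variable {f finv : ℝ → ℝ} {D : Set ℝ}

theorem of_cond {P : Prop} {b : ℝ} (hb : P → 0 < b)
    (hc : ContinuousOn f {y | 0 ≤ y ∧ (P → y < b)})
    (hmono : StrictMonoOn f {y | 0 ≤ y ∧ (P → y < b)}) (h0 : f 0 = 0)
    (hinv : ∀ z, 0 ≤ z → f (finv z) = z ∧ 0 ≤ finv z ∧ (P → finv z < b)) :
    ContinuousIncreasingBij f finv {y | 0 ≤ y ∧ (P → y < b)} where
  ordConnected := ⟨fun _ hx _ hy _ hz => ⟨hx.1.trans hz.1, fun hP => hz.2.trans_lt (hy.2 hP)⟩⟩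
  subset_Ici _ hy := hy.1
  zero_mem := ⟨le_rfl, hb⟩
  map_zero := h0
  continuousOn := hc
  strictMonoOn := hmono
  mapsTo_inv z hz := (hinv z hz).2
  rightInvOn z hz := (hinv z hz).1

theorem inv_pos (hf : ContinuousIncreasingBij f finv D) {z : ℝ} (hz : 0 < z) : 0 < finv z :=
  (hf.subset_Ici (hf.mapsTo_inv hz.le)).lt_of_ne fun h =>
    hz.ne' (by rw [← hf.rightInvOn hz.le, ← h, hf.map_zero])

theorem tendsto_inv_comp {α : Type*} (hf : ContinuousIncreasingBij f finv D) {t : ℝ}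
    (ht : t ∈ D) {l : Filter α} {k : α → ℝ} (hk : Tendsto k l (𝓝 (f t)))
    (hk0 : ∀ᶠ x in l, 0 ≤ k x) :
    Tendsto (fun x => finv (k x)) l (𝓝 t) :=
  hf.strictMonoOn.tendsto_of_tendsto_comp hf.ordConnected ht
    (hk0.mono fun _ hx => hf.mapsTo_inv hx)
    (hk.congr' (hk0.mono fun _ hx => (hf.rightInvOn hx).symm))

theorem tendsto_inv_nhdsGT_zero (hf : ContinuousIncreasingBij f finv D) :
    Tendsto finv (𝓝[>] 0) (𝓝[>] 0) := by
  refine tendsto_nhdsWithin_iff.2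
    ⟨hf.tendsto_inv_comp hf.zero_mem ?_ (eventually_mem_nhdsWithin.mono fun _ hz => le_of_lt hz),
      eventually_mem_nhdsWithin.mono fun _ hz => hf.inv_pos hz⟩
  rw [hf.map_zero]
  exact nhdsWithin_le_nhds

end ContinuousIncreasingBij

section Conservation

variable {ρ g : ℝ → ℝ} {a lam mu : ℝ}

theorem tendsto_nhdsGT_zero_of_conservation (ha : 0 < a) (hlam : 0 < lam) (hmu : 0 ≤ mu)
    (hg : MonotoneOn g (Ico 0 a)) (hg0 : g 0 = 0)
    (hρ : ∀ T, 0 ≤ T → ρ T ∈ Ico 0 a ∧ lam * ρ T + mu * g (ρ T) = T) :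
    Tendsto ρ (𝓝[>] 0) (𝓝[>] 0) := by
  have hh : StrictMonoOn (fun y => lam * y + mu * g y) (Ico 0 a) := fun x hx y hy hxy =>
    add_lt_add_of_lt_of_le (mul_lt_mul_of_pos_left hxy hlam)
      (mul_le_mul_of_nonneg_left (hg hx hy hxy.le) hmu)
  have hT : ∀ᶠ T in 𝓝[>] (0 : ℝ), ρ T ∈ Ico 0 a ∧ lam * ρ T + mu * g (ρ T) = T :=
    eventually_mem_nhdsWithin.mono fun T hT => hρ T (le_of_lt hT)
  have hh0 : lam * 0 + mu * g 0 = 0 := by rw [hg0]; ring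
  refine tendsto_nhdsWithin_iff.2 ⟨hh.tendsto_of_tendsto_comp ordConnected_Ico ⟨le_rfl, ha⟩
    (hT.mono fun _ h => h.1) ?_, ?_⟩
  · rw [hh0]
    exact (tendsto_id.mono_left nhdsWithin_le_nhds).congr' (hT.mono fun _ h => h.2.symm)
  · filter_upwards [eventually_mem_nhdsWithin, hT] with T hT0 hT
    refine hT.1.1.lt_of_ne fun h => (mem_Ioi.1 hT0).ne' ?_
    rw [← hT.2, ← h, hh0]

theorem tendsto_nhdsLT_of_conservation (hlam : 0 ≤ lam) (hmu : 0 ≤ mu)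
    (hg : MonotoneOn g (Ico 0 a))
    (hρ : ∀ T, 0 ≤ T → ρ T ∈ Ico 0 a ∧ lam * ρ T + mu * g (ρ T) = T) :
    Tendsto ρ atTop (𝓝[<] a) := by
  have hh : MonotoneOn (fun y => lam * y + mu * g y) (Ico 0 a) := fun x hx y hy hxy =>
    add_le_add (mul_le_mul_of_nonneg_left hxy hlam)
      (mul_le_mul_of_nonneg_left (hg hx hy hxy) hmu)
  have hT : ∀ᶠ T in atTop, ρ T ∈ Ico 0 a ∧ lam * ρ T + mu * g (ρ T) = T :=
    (eventually_ge_atTop 0).mono hρ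
  exact hh.tendsto_nhdsLT_of_tendsto_atTop_comp (hT.mono fun _ h => h.1)
    (tendsto_id.congr' (hT.mono fun _ h => h.2.symm))

end Conservation

theorem exists_pos_tendsto_div_self_of_recursion {M m : ℕ} {d : ℝ} (hd : 0 < d)
    {u v w S lam mu : ℕ → ℝ} (hu : ∀ m, 1 ≤ m → m ≤ M - 1 → 0 < u m)
    (hv : ∀ m, 1 ≤ m → m ≤ M - 1 → 0 < v m) (hw : ∀ m, 1 ≤ m → m ≤ M - 1 → 0 < w m)
    (hS : ∀ m, 2 ≤ m → m ≤ M → 0 < S m) {ψ : ℕ → ℝ → ℝ} (hψM : ∀ y, ψ M y = y)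
    (hψrec : ∀ m, 2 ≤ m → m ≤ M → ∀ y,
      ψ (m - 1) y = d * (v (m - 1) / w (m - 1) + 1) * y /
        (u (m - 1) * (S m - lam m * y - mu m * ψ m y)))
    (hm1 : 1 ≤ m) (hmM : m ≤ M) :
    ∃ c, 0 < c ∧ Tendsto (fun y => ψ m y / y) (𝓝[>] 0) (𝓝 c) := by
  induction hmM using Nat.decreasingInduction with
  | self =>
    refine ⟨1, one_pos, tendsto_const_nhds.congr' ?_⟩
    filter_upwards [eventually_mem_nhdsWithin] with y hy
    rw [hψM, div_self (ne_of_gt hy)]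
  | of_succ k hk ih =>
    obtain ⟨c, -, hc⟩ := ih (by omega)
    have hrec := hψrec (k + 1) (by omega) hk
    simp only [Nat.add_sub_cancel] at hrec
    have hK : 0 < d * (v k / w k + 1) :=
      mul_pos hd (add_pos (div_pos (hv k hm1 (by omega)) (hw k hm1 (by omega))) one_pos)
    have huS : 0 < u k * S (k + 1) := mul_pos (hu k hm1 (by omega)) (hS (k + 1) (by omega) hk)
    refine ⟨_, div_pos hK huS, ?_⟩
    simp only [hrec]
    exact tendsto_div_self_of_recursion hc _ _ _ _ _ huS.ne'

/-- `T - λ z - μ g z` at the total `T = λ y + μ g y`: the free amount left in the top layer. -/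
def freeAmount (lam mu : ℝ) (g : ℝ → ℝ) (y z : ℝ) : ℝ :=
  lam * (y - z) + mu * (g y - g z)

/-- The coefficient `c_{m,x}(T)` at `y = ρ_M(T)`, with `g = ψ₁`, `f = ψ_m` and `finv = ψ_m⁻¹`. -/
noncomputable def responseCoeff (d lam mu : ℝ) (g f finv : ℝ → ℝ) (x T y : ℝ) : ℝ :=
  d * finv (x * f y) / (T - lam * finv (x * f y) - mu * g (finv (x * f y)))

noncomputable def responseRatio (lam mu : ℝ) (g f finv : ℝ → ℝ) (ε δ y : ℝ) : ℝ :=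
  finv (ε * f y) / finv (δ * f y) *
    (freeAmount lam mu g y (finv (δ * f y)) / freeAmount lam mu g y (finv (ε * f y)))

theorem responseCoeff_div_responseCoeff {d lam mu T y : ℝ} {g f finv : ℝ → ℝ} (ε δ : ℝ)
    (hd : d ≠ 0) (hT : lam * y + mu * g y = T) :
    responseCoeff d lam mu g f finv ε T y / responseCoeff d lam mu g f finv δ T y =
      responseRatio lam mu g f finv ε δ y := by
  have hfree : ∀ z, T - lam * z - mu * g z = freeAmount lam mu g y z := fun z => by
    rw [← hT, freeAmount]; ring
  simp only [responseCoeff, responseRatio, hfree, mul_div_assoc, mul_div_mul_left _ _ hd]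
  rw [div_div_div_eq, div_mul_div_comm, mul_comm (freeAmount lam mu g y _)]

theorem tendsto_responseCoeff_div_of_tendsto {d lam mu ε δ L : ℝ} {g f finv ρ : ℝ → ℝ}
    {l l' : Filter ℝ} (hd : d ≠ 0) (hρ : Tendsto ρ l l')
    (hT : ∀ᶠ T in l, lam * ρ T + mu * g (ρ T) = T)
    (hL : Tendsto (responseRatio lam mu g f finv ε δ) l' (𝓝 L)) :
    Tendsto (fun T => responseCoeff d lam mu g f finv ε T (ρ T) /
      responseCoeff d lam mu g f finv δ T (ρ T)) l (𝓝 L) :=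
  (hL.comp hρ).congr' (hT.mono fun _ hT => (responseCoeff_div_responseCoeff ε δ hd hT).symm)

theorem tendsto_freeAmount_div_self {g p : ℝ → ℝ} {k x : ℝ} (lam mu : ℝ) (hx : 0 < x)
    (hg : Tendsto (fun y => g y / y) (𝓝[>] 0) (𝓝 k))
    (hp : Tendsto (fun y => p y / y) (𝓝[>] 0) (𝓝 x)) :
    Tendsto (fun y => freeAmount lam mu g y (p y) / y) (𝓝[>] 0)
      (𝓝 ((1 - x) * (lam + mu * k))) := by
  have hp0 := tendsto_nhdsGT_zero_of_tendsto_div_self hx hp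
  have hgp : Tendsto (fun y => g (p y) / p y * (p y / y)) (𝓝[>] 0) (𝓝 (k * x)) :=
    (hg.comp hp0).mul hp
  have h := (((tendsto_const_nhds (x := 1)).sub hp).const_mul lam).add
    ((hg.sub hgp).const_mul mu)
  refine Tendsto.congr' ?_ (by convert h using 2; ring)
  filter_upwards [eventually_mem_nhdsWithin, hp0.eventually eventually_mem_nhdsWithin]
    with y hy hpy
  simp only [freeAmount, mem_Ioi] at hy hpy ⊢
  field_simp

theorem tendsto_freeAmount_div_of_tendsto_atTop {l : Filter ℝ} {g p : ℝ → ℝ} {a β r : ℝ}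
    (lam mu : ℝ) (hl : l ≤ 𝓝 a) (hg : Tendsto g l atTop) (hp : Tendsto p l (𝓝 β))
    (hr : Tendsto (fun y => g (p y) / g y) l (𝓝 r)) :
    Tendsto (fun y => freeAmount lam mu g y (p y) / g y) l (𝓝 (mu * (1 - r))) := by
  have h := ((((tendsto_id'.2 hl).sub hp).const_mul lam).mul hg.inv_tendsto_atTop).add
    (((tendsto_const_nhds (x := 1)).sub hr).const_mul mu)
  refine Tendsto.congr' ?_ (by convert h using 2; ring)
  filter_upwards [hg.eventually_gt_atTop 0] with y hy
  simp only [freeAmount, id, Pi.inv_apply]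
  field_simp

theorem tendsto_responseRatio_nhdsGT_zero {lam mu c k ε δ : ℝ} {g f finv : ℝ → ℝ} {D : Set ℝ}
    (hf : ContinuousIncreasingBij f finv D) (hc : 0 < c)
    (hfc : Tendsto (fun y => f y / y) (𝓝[>] 0) (𝓝 c))
    (hgk : Tendsto (fun y => g y / y) (𝓝[>] 0) (𝓝 k)) (hk : lam + mu * k ≠ 0)
    (hε : 0 < ε) (hε1 : ε ≠ 1) (hδ : 0 < δ) :
    Tendsto (responseRatio lam mu g f finv ε δ) (𝓝[>] 0)
      (𝓝 (ε * (1 - δ) / (δ * (1 - ε)))) := by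
  have hp : ∀ x, 0 < x → Tendsto (fun y => finv (x * f y) / y) (𝓝[>] 0) (𝓝 x) := fun x hx =>
    tendsto_comp_const_mul_div_self hc hx hfc hf.tendsto_inv_nhdsGT_zero
      fun z hz => hf.rightInvOn hz.le
  have hy : ∀ᶠ y in 𝓝[>] (0 : ℝ), y ≠ 0 :=
    eventually_mem_nhdsWithin.mono fun _ hy => ne_of_gt hy
  have hε1' : 1 - ε ≠ 0 := sub_ne_zero.2 hε1.symm
  have hlevel := (hp ε hε).div_of_div_div (hp δ hδ) hδ.ne' hy
  have hfree := (tendsto_freeAmount_div_self lam mu hδ hgk (hp δ hδ)).div_of_div_div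
    (tendsto_freeAmount_div_self lam mu hε hgk (hp ε hε)) (mul_ne_zero hε1' hk) hy
  have hlim : ε * (1 - δ) / (δ * (1 - ε)) =
      ε / δ * ((1 - δ) * (lam + mu * k) / ((1 - ε) * (lam + mu * k))) := by
    field_simp
  rw [hlim]
  exact hlevel.mul hfree

theorem tendsto_responseRatio_of_tendsto_atTop {lam mu ε δ a βε βδ rε rδ : ℝ}
    {g f finv : ℝ → ℝ} {l : Filter ℝ} (hl : l ≤ 𝓝 a) (hg : Tendsto g l atTop) (hmu : mu ≠ 0)
    (hε : Tendsto (fun y => finv (ε * f y)) l (𝓝 βε))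
    (hδ : Tendsto (fun y => finv (δ * f y)) l (𝓝 βδ)) (hβδ : βδ ≠ 0)
    (hrε : Tendsto (fun y => g (finv (ε * f y)) / g y) l (𝓝 rε))
    (hrδ : Tendsto (fun y => g (finv (δ * f y)) / g y) l (𝓝 rδ)) (hrε1 : rε ≠ 1) :
    Tendsto (responseRatio lam mu g f finv ε δ) l (𝓝 (βε / βδ * ((1 - rδ) / (1 - rε)))) := by
  have hfree := (tendsto_freeAmount_div_of_tendsto_atTop lam mu hl hg hδ hrδ).div_of_div_div
    (tendsto_freeAmount_div_of_tendsto_atTop lam mu hl hg hε hrε)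
    (mul_ne_zero hmu (sub_ne_zero.2 hrε1.symm)) ((hg.eventually_gt_atTop 0).mono fun _ h => h.ne')
  rw [← mul_div_mul_left (1 - rδ) (1 - rε) hmu]
  exact (hε.div hδ hβδ).mul hfree

theorem tendsto_responseRatio_self_nhdsLT {lam mu ε δ a : ℝ} {g ginv : ℝ → ℝ}
    (hg : ContinuousIncreasingBij g ginv (Ico 0 a)) (hgtop : Tendsto g (𝓝[<] a) atTop)
    (ha : 0 < a) (hmu : mu ≠ 0) (hε : 0 < ε) (hε1 : ε ≠ 1) (hδ : 0 < δ) :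
    Tendsto (responseRatio lam mu g g ginv ε δ) (𝓝[<] a) (𝓝 ((1 - δ) / (1 - ε))) := by
  have hgpos : ∀ᶠ y in 𝓝[<] a, 0 < g y := hgtop.eventually_gt_atTop 0
  have hright : ∀ x, 0 < x →
      (fun y => g (ginv (x * g y))) =ᶠ[𝓝[<] a] fun y => x * g y := fun x hx =>
    hgpos.mono fun y hy => hg.rightInvOn (mul_pos hx hy).le
  have hlevel : ∀ x, 0 < x → Tendsto (fun y => ginv (x * g y)) (𝓝[<] a) (𝓝 a) := fun x hx =>
    (hg.strictMonoOn.monotoneOn.tendsto_nhdsLT_of_tendsto_atTop_comp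
      (hgpos.mono fun y hy => hg.mapsTo_inv (mul_pos hx hy).le)
      ((hgtop.const_mul_atTop hx).congr' (hright x hx).symm)).mono_right nhdsWithin_le_nhds
  have hratio : ∀ x, 0 < x → Tendsto (fun y => g (ginv (x * g y)) / g y) (𝓝[<] a) (𝓝 x) :=
    fun x hx => tendsto_const_nhds.congr' <| (hright x hx).and hgpos |>.mono fun y hy => by
      dsimp only at hy ⊢
      rw [hy.1, mul_div_cancel_right₀ _ hy.2.ne']
  have h := tendsto_responseRatio_of_tendsto_atTop (lam := lam) nhdsWithin_le_nhds hgtop hmu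
    (hlevel ε hε) (hlevel δ hδ) ha.ne' (hratio ε hε) (hratio δ hδ) hε1
  rwa [div_self ha.ne', one_mul] at h

theorem tendsto_responseRatio_nhdsLT {lam mu ε δ a : ℝ} {g f finv : ℝ → ℝ} {D : Set ℝ}
    (hf : ContinuousIncreasingBij f finv D) (haD : a ∈ D) (ha : 0 < a)
    (hgc : ContinuousOn g (Ico 0 a)) (hgtop : Tendsto g (𝓝[<] a) atTop) (hmu : mu ≠ 0)
    (hε : 0 < ε) (hε1 : ε < 1) (hδ : 0 < δ) (hδ1 : δ < 1) :
    Tendsto (responseRatio lam mu g f finv ε δ) (𝓝[<] a)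
      (𝓝 (finv (ε * f a) / finv (δ * f a))) := by
  have hfa : 0 < f a := hf.map_zero ▸ hf.strictMonoOn hf.zero_mem haD ha
  have hnear : ∀ᶠ y in 𝓝[<] a, y ∈ D ∧ 0 ≤ f y := by
    filter_upwards [Ioo_mem_nhdsLT ha] with y hy
    have hyD : y ∈ D := hf.ordConnected.out hf.zero_mem haD (Ioo_subset_Icc_self hy)
    exact ⟨hyD, hf.map_zero ▸ hf.strictMonoOn.monotoneOn hf.zero_mem hyD hy.1.le⟩
  have hfy : Tendsto f (𝓝[<] a) (𝓝 (f a)) := (hf.continuousOn a haD).tendsto.comp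
    (tendsto_nhdsWithin_iff.2 ⟨nhdsWithin_le_nhds, hnear.mono fun _ h => h.1⟩)
  have hβ : ∀ x, 0 < x → x < 1 → 0 < finv (x * f a) ∧ finv (x * f a) < a := fun x hx hx1 => by
    have hxfa := mul_pos hx hfa
    refine ⟨hf.inv_pos hxfa, (hf.strictMonoOn.lt_iff_lt (hf.mapsTo_inv hxfa.le) haD).1 ?_⟩
    rw [hf.rightInvOn hxfa.le]
    exact mul_lt_of_lt_one_left hfa hx1
  have hlevel : ∀ x, 0 < x →
      Tendsto (fun y => finv (x * f y)) (𝓝[<] a) (𝓝 (finv (x * f a))) := fun x hx =>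
    hf.tendsto_inv_comp (hf.mapsTo_inv (mul_pos hx hfa).le)
      (by rw [hf.rightInvOn (mul_pos hx hfa).le]; exact hfy.const_mul x)
      (hnear.mono fun _ h => mul_nonneg hx.le h.2)
  -- the levels converge strictly below `a`, so `g` stays bounded along them
  have hratio : ∀ x, 0 < x → x < 1 →
      Tendsto (fun y => g (finv (x * f y)) / g y) (𝓝[<] a) (𝓝 0) := fun x hx hx1 => by
    obtain ⟨hβ0, hβa⟩ := hβ x hx hx1
    refine Tendsto.div_atTop ((hgc _ ⟨hβ0.le, hβa⟩).tendsto.comp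
      (tendsto_nhdsWithin_iff.2 ⟨hlevel x hx, ?_⟩)) hgtop
    filter_upwards [hnear, (hlevel x hx).eventually (eventually_lt_nhds hβa)] with y hy hya
    exact ⟨hf.subset_Ici (hf.mapsTo_inv (mul_nonneg hx.le hy.2)), hya⟩
  have h := tendsto_responseRatio_of_tendsto_atTop (lam := lam) nhdsWithin_le_nhds hgtop hmu
    (hlevel ε hε) (hlevel δ hδ) (hβ δ hδ hδ1).1.ne' (hratio ε hε hε1) (hratio δ hδ hδ1)
    zero_ne_one
  simpa using h

theorem tendsto_responseRatio_nhdsLT_of_eq_id {lam mu ε δ a : ℝ} {g f finv : ℝ → ℝ}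
    {D : Set ℝ} (hf : ContinuousIncreasingBij f finv D) (hfid : ∀ y, f y = y) (haD : a ∈ D)
    (ha : 0 < a) (hgc : ContinuousOn g (Ico 0 a)) (hgtop : Tendsto g (𝓝[<] a) atTop)
    (hmu : mu ≠ 0) (hε : 0 < ε) (hε1 : ε < 1) (hδ : 0 < δ) (hδ1 : δ < 1) :
    Tendsto (responseRatio lam mu g f finv ε δ) (𝓝[<] a) (𝓝 (ε / δ)) := by
  have hinv : ∀ z, 0 ≤ z → finv z = z := fun z hz => by simpa [hfid] using hf.rightInvOn hz
  have h := tendsto_responseRatio_nhdsLT (lam := lam) hf haD ha hgc hgtop hmu hε hε1 hδ hδ1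
  rwa [hfid, hinv _ (by positivity), hinv _ (by positivity), mul_div_mul_right _ _ ha.ne']
    at h

theorem stmt19_general
    (M : ℕ) (hM : 2 ≤ M)
    (d : ℝ) (hd : 0 < d)
    (u v w : ℕ → ℝ)
    (hu : ∀ m, 1 ≤ m → m ≤ M - 1 → 0 < u m)
    (hv : ∀ m, 1 ≤ m → m ≤ M - 1 → 0 < v m)
    (hw : ∀ m, 1 ≤ m → m ≤ M - 1 → 0 < w m)
    (S lam mu : ℕ → ℝ)
    (hS : ∀ m, 2 ≤ m → m ≤ M → 0 < S m)
    (hlam : ∀ m, 1 ≤ m → m ≤ M → 0 < lam m)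
    (hmu : ∀ m, 1 ≤ m → m ≤ M → 0 < mu m)
    (ψ : ℕ → ℝ → ℝ)
    (hψM : ∀ y, ψ M y = y)
    (hψrec : ∀ m, 2 ≤ m → m ≤ M → ∀ y,
      ψ (m - 1) y = d * (v (m - 1) / w (m - 1) + 1) * y /
        (u (m - 1) * (S m - lam m * y - mu m * ψ m y)))
    (ξ : ℕ → ℝ)
    (hξpos : ∀ m, 1 ≤ m → m ≤ M - 1 → 0 < ξ m)
    (hξlt : ∀ m, 1 ≤ m → m + 1 ≤ M - 1 → ξ m < ξ (m + 1))
    (hψprop : ∀ m, 1 ≤ m → m ≤ M →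
      ContinuousOn (ψ m) {y : ℝ | 0 ≤ y ∧ (m ≤ M - 1 → y < ξ m)} ∧
      StrictMonoOn (ψ m) {y : ℝ | 0 ≤ y ∧ (m ≤ M - 1 → y < ξ m)} ∧
      (∀ y, 0 ≤ y → (m ≤ M - 1 → y < ξ m) → 0 ≤ ψ m y) ∧
      ψ m 0 = 0)
    (hψtop : ∀ m, 1 ≤ m → m ≤ M - 1 → Tendsto (ψ m) (𝓝[<] (ξ m)) atTop)
    (ψinv : ℕ → ℝ → ℝ)
    (hinv : ∀ m, 1 ≤ m → m ≤ M →
      (∀ y, 0 ≤ y → (m ≤ M - 1 → y < ξ m) → ψinv m (ψ m y) = y) ∧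
      (∀ x, 0 ≤ x → ψ m (ψinv m x) = x ∧ 0 ≤ ψinv m x ∧ (m ≤ M - 1 → ψinv m x < ξ m)))
    (ρ : ℝ → ℝ)
    (hρ : ∀ T, 0 ≤ T → ρ T ∈ Set.Ico 0 (ξ 1) ∧ lam 1 * ρ T + mu 1 * ψ 1 (ρ T) = T)
    (ε δ : ℝ) (hε : 0 < ε) (hεδ : ε < δ) (hδ : δ < 1)
    (m : ℕ) (hm1 : 1 ≤ m) (hmM : m ≤ M) :
    Tendsto (fun T =>
      (d * ψinv m (ε * ψ m (ρ T)) /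
        (T - lam 1 * ψinv m (ε * ψ m (ρ T)) - mu 1 * ψ 1 (ψinv m (ε * ψ m (ρ T))))) /
      (d * ψinv m (δ * ψ m (ρ T)) /
        (T - lam 1 * ψinv m (δ * ψ m (ρ T)) - mu 1 * ψ 1 (ψinv m (δ * ψ m (ρ T))))))
      (𝓝[>] 0) (𝓝 (ε * (1 - δ) / (δ * (1 - ε)))) ∧
    (m = 1 → Tendsto (fun T =>
      (d * ψinv m (ε * ψ m (ρ T)) /
        (T - lam 1 * ψinv m (ε * ψ m (ρ T)) - mu 1 * ψ 1 (ψinv m (ε * ψ m (ρ T))))) /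
      (d * ψinv m (δ * ψ m (ρ T)) /
        (T - lam 1 * ψinv m (δ * ψ m (ρ T)) - mu 1 * ψ 1 (ψinv m (δ * ψ m (ρ T)))))) atTop (𝓝 ((1 - δ) / (1 - ε)))) ∧
    (1 < m → m < M → Tendsto (fun T =>
      (d * ψinv m (ε * ψ m (ρ T)) /
        (T - lam 1 * ψinv m (ε * ψ m (ρ T)) - mu 1 * ψ 1 (ψinv m (ε * ψ m (ρ T))))) /
      (d * ψinv m (δ * ψ m (ρ T)) /
        (T - lam 1 * ψinv m (δ * ψ m (ρ T)) - mu 1 * ψ 1 (ψinv m (δ * ψ m (ρ T)))))) atTop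
      (𝓝 (ψinv m (ε * ψ m (ξ 1)) / ψinv m (δ * ψ m (ξ 1))))) ∧
    (m = M → Tendsto (fun T =>
      (d * ψinv m (ε * ψ m (ρ T)) /
        (T - lam 1 * ψinv m (ε * ψ m (ρ T)) - mu 1 * ψ 1 (ψinv m (ε * ψ m (ρ T))))) /
      (d * ψinv m (δ * ψ m (ρ T)) /
        (T - lam 1 * ψinv m (δ * ψ m (ρ T)) - mu 1 * ψ 1 (ψinv m (δ * ψ m (ρ T)))))) atTop (𝓝 (ε / δ))) := by
  have hM1 : 1 ≤ M - 1 := by omega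
  have hξ1 : 0 < ξ 1 := hξpos 1 le_rfl hM1
  have hδ0 : 0 < δ := hε.trans hεδ
  have hε1 : ε < 1 := hεδ.trans hδ
  have hlam1 : 0 < lam 1 := hlam 1 le_rfl (by omega)
  have hmu1 : 0 < mu 1 := hmu 1 le_rfl (by omega)
  have hbij : ∀ j, 1 ≤ j → j ≤ M → ContinuousIncreasingBij (ψ j) (ψinv j)
      {y | 0 ≤ y ∧ (j ≤ M - 1 → y < ξ j)} := fun j h1 h2 =>
    let ⟨hc, hmono, _, h0⟩ := hψprop j h1 h2
    .of_cond (hξpos j h1) hc hmono h0 (hinv j h1 h2).2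
  have hD1 : {y : ℝ | 0 ≤ y ∧ (1 ≤ M - 1 → y < ξ 1)} = Ico 0 (ξ 1) := by ext; simp [hM1]
  have hg : ContinuousIncreasingBij (ψ 1) (ψinv 1) (Ico 0 (ξ 1)) :=
    hD1 ▸ hbij 1 le_rfl (by omega)
  have hgtop := hψtop 1 le_rfl hM1
  have hρtop := tendsto_nhdsLT_of_conservation hlam1.le hmu1.le hg.strictMonoOn.monotoneOn hρ
  have hT : ∀ᶠ T in atTop, lam 1 * ρ T + mu 1 * ψ 1 (ρ T) = T :=
    (eventually_ge_atTop 0).mono fun T hT => (hρ T hT).2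
  have hlim := fun L => tendsto_responseCoeff_div_of_tendsto (f := ψ m) (finv := ψinv m)
    (ε := ε) (δ := δ) (L := L) hd.ne' hρtop hT
  refine ⟨?_, fun hm => ?_, fun h1m hmM' => hlim _ ?_, fun hm => hlim _ ?_⟩
  · obtain ⟨c, hc, hfc⟩ :=
      exists_pos_tendsto_div_self_of_recursion hd hu hv hw hS hψM hψrec hm1 hmM
    obtain ⟨k, hk, hgk⟩ :=
      exists_pos_tendsto_div_self_of_recursion hd hu hv hw hS hψM hψrec le_rfl (by omega)
    exact tendsto_responseCoeff_div_of_tendsto hd.ne'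
      (tendsto_nhdsGT_zero_of_conservation hξ1 hlam1 hmu1.le hg.strictMonoOn.monotoneOn
        hg.map_zero hρ)
      (eventually_mem_nhdsWithin.mono fun T hT => (hρ T (le_of_lt hT)).2)
      (tendsto_responseRatio_nhdsGT_zero (hbij m hm1 hmM) hc hfc hgk
        (add_pos hlam1 (mul_pos hmu1 hk)).ne' hε hε1.ne hδ0)
  · subst hm
    exact hlim _ (tendsto_responseRatio_self_nhdsLT hg hgtop hξ1 hmu1.ne' hε hε1.ne hδ0)
  · have hξm : ξ 1 < ξ m := (strictMonoOn_of_lt_add_one ordConnected_Icc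
      fun j _ hj hj1 => hξlt j hj.1 hj1.2) ⟨le_rfl, hM1⟩ ⟨hm1, by omega⟩ h1m
    exact tendsto_responseRatio_nhdsLT (hbij m hm1 hmM) ⟨hξ1.le, fun _ => hξm⟩ hξ1
      hg.continuousOn hgtop hmu1.ne' hε hε1 hδ0 hδ
  · exact tendsto_responseRatio_nhdsLT_of_eq_id (hbij m hm1 hmM) (hm ▸ hψM)
      ⟨hξ1.le, fun h => absurd h (by omega)⟩ hξ1 hg.continuousOn hgtop hmu1.ne' hε hε1 hδ0 hδ

theorem stmt19
    (M : ℕ) (hM : 2 ≤ M)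
    (d : ℝ) (hd : 0 < d)
    (u v w : ℕ → ℝ)
    (hu : ∀ m, 1 ≤ m → m ≤ M - 1 → 0 < u m)
    (hv : ∀ m, 1 ≤ m → m ≤ M - 1 → 0 < v m)
    (hw : ∀ m, 1 ≤ m → m ≤ M - 1 → 0 < w m)
    (S lam mu : ℕ → ℝ)
    (hS : ∀ m, 2 ≤ m → m ≤ M → 0 < S m)
    (hlam : ∀ m, 1 ≤ m → m ≤ M → 0 < lam m)
    (hmu : ∀ m, 1 ≤ m → m ≤ M → 0 < mu m)
    (ψ : ℕ → ℝ → ℝ)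
    (hψM : ∀ y, ψ M y = y)
    (hψrec : ∀ m, 2 ≤ m → m ≤ M → ∀ y,
      ψ (m - 1) y = d * (v (m - 1) / w (m - 1) + 1) * y /
        (u (m - 1) * (S m - lam m * y - mu m * ψ m y)))
    (ξ : ℕ → ℝ)
    (hξpos : ∀ m, 1 ≤ m → m ≤ M - 1 → 0 < ξ m)
    (hξlt : ∀ m, 1 ≤ m → m + 1 ≤ M - 1 → ξ m < ξ (m + 1))
    (hξzero : ∀ m, 1 ≤ m → m ≤ M - 1 →
      S (m + 1) - lam (m + 1) * ξ m - mu (m + 1) * ψ (m + 1) (ξ m) = 0)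
    (hξuniq : ∀ m, 1 ≤ m → m ≤ M - 1 → ∀ y, 0 < y → (m + 1 ≤ M - 1 → y < ξ (m + 1)) →
      S (m + 1) - lam (m + 1) * y - mu (m + 1) * ψ (m + 1) y = 0 → y = ξ m)
    (hψprop : ∀ m, 1 ≤ m → m ≤ M →
      ContinuousOn (ψ m) {y : ℝ | 0 ≤ y ∧ (m ≤ M - 1 → y < ξ m)} ∧
      StrictMonoOn (ψ m) {y : ℝ | 0 ≤ y ∧ (m ≤ M - 1 → y < ξ m)} ∧
      (∀ y, 0 ≤ y → (m ≤ M - 1 → y < ξ m) → 0 ≤ ψ m y) ∧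
      ψ m 0 = 0)
    (hψtop : ∀ m, 1 ≤ m → m ≤ M - 1 → Tendsto (ψ m) (𝓝[<] (ξ m)) atTop)
    (ψinv : ℕ → ℝ → ℝ)
    (hinv : ∀ m, 1 ≤ m → m ≤ M →
      (∀ y, 0 ≤ y → (m ≤ M - 1 → y < ξ m) → ψinv m (ψ m y) = y) ∧
      (∀ x, 0 ≤ x → ψ m (ψinv m x) = x ∧ 0 ≤ ψinv m x ∧ (m ≤ M - 1 → ψinv m x < ξ m)))
    (ρ : ℝ → ℝ)
    (hρ : ∀ T, 0 ≤ T → ρ T ∈ Set.Ico 0 (ξ 1) ∧ lam 1 * ρ T + mu 1 * ψ 1 (ρ T) = T)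
    (ε δ : ℝ) (hε : 0 < ε) (hεδ : ε < δ) (hδ : δ < 1)
    (m : ℕ) (hm1 : 1 ≤ m) (hmM : m ≤ M) :
    Tendsto (fun T =>
      (d * ψinv m (ε * ψ m (ρ T)) /
        (T - lam 1 * ψinv m (ε * ψ m (ρ T)) - mu 1 * ψ 1 (ψinv m (ε * ψ m (ρ T))))) /
      (d * ψinv m (δ * ψ m (ρ T)) /
        (T - lam 1 * ψinv m (δ * ψ m (ρ T)) - mu 1 * ψ 1 (ψinv m (δ * ψ m (ρ T))))))
      (𝓝[>] 0) (𝓝 (ε * (1 - δ) / (δ * (1 - ε)))) ∧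
    (m = 1 → Tendsto (fun T =>
      (d * ψinv m (ε * ψ m (ρ T)) /
        (T - lam 1 * ψinv m (ε * ψ m (ρ T)) - mu 1 * ψ 1 (ψinv m (ε * ψ m (ρ T))))) /
      (d * ψinv m (δ * ψ m (ρ T)) /
        (T - lam 1 * ψinv m (δ * ψ m (ρ T)) - mu 1 * ψ 1 (ψinv m (δ * ψ m (ρ T)))))) atTop (𝓝 ((1 - δ) / (1 - ε)))) ∧
    (1 < m → m < M → Tendsto (fun T =>
      (d * ψinv m (ε * ψ m (ρ T)) /
        (T - lam 1 * ψinv m (ε * ψ m (ρ T)) - mu 1 * ψ 1 (ψinv m (ε * ψ m (ρ T))))) /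
      (d * ψinv m (δ * ψ m (ρ T)) /
        (T - lam 1 * ψinv m (δ * ψ m (ρ T)) - mu 1 * ψ 1 (ψinv m (δ * ψ m (ρ T)))))) atTop
      (𝓝 (ψinv m (ε * ψ m (ξ 1)) / ψinv m (δ * ψ m (ξ 1))))) ∧
    (m = M → Tendsto (fun T =>
      (d * ψinv m (ε * ψ m (ρ T)) /
        (T - lam 1 * ψinv m (ε * ψ m (ρ T)) - mu 1 * ψ 1 (ψinv m (ε * ψ m (ρ T))))) /
      (d * ψinv m (δ * ψ m (ρ T)) /
        (T - lam 1 * ψinv m (δ * ψ m (ρ T)) - mu 1 * ψ 1 (ψinv m (δ * ψ m (ρ T)))))) atTop (𝓝 (ε / δ))) :=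
  stmt19_general M hM d hd u v w hu hv hw S lam mu hS hlam hmu ψ hψM hψrec ξ hξpos hξlt hψprop hψtop
    ψinv hinv ρ hρ ε δ hε hεδ hδ m hm1 hmM
end
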